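/- arXiv:2212.06181 — 4 statements merged into one kernel-verified Lean document; each statement's English description precedes it below -/
import Mathlib

section
/- Suppose there is a set S ⊆ G such that the smallest closed subgroup of G containing S is G itself, and such that every open neighborhood of every point of S has positive ν-measure. Then the 1-eigenspace {v ∈ V : M_ρ(ν) v = v}, the 1-eigenspace of the adjoint {v ∈ V : M_ρ(ν)* v = v}, and the G-fixed-point space {v ∈ V : ρ(g) v = v for all g ∈ G} all coincide. -/
/-!
If `M v = v`, then `g ↦ ‖v‖² - re ⟪v, ρ g v⟫` is a continuous nonnegative function with integral
zero, so it vanishes on the support of `ν`, in particular on `S`. As each `ρ s` is a contraction,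
`re ⟪v, ρ s v⟫ = ‖v‖²` forces `ρ s v = v`; the stabilizer of `v` is a closed subgroup containing
`S`, hence all of `G`. The same equality argument shows that a contraction and its adjoint have
the same fixed vectors, which gives the statement for `M†`.
-/

open MeasureTheory ContinuousLinearMap
open scoped InnerProductSpace

section InnerProduct

variable {𝕜 E : Type*} [RCLike 𝕜] [NormedAddCommGroup E] [InnerProductSpace 𝕜 E]

theorem eq_of_norm_le_of_re_inner_eq_norm_sq {u v : E} (hu : ‖u‖ ≤ ‖v‖)
    (h : RCLike.re ⟪v, u⟫_𝕜 = ‖v‖ ^ 2) : u = v := by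
  have hsq : ‖u - v‖ ^ 2 ≤ 0 := by
    rw [norm_sub_sq (𝕜 := 𝕜), inner_re_symm, h]
    nlinarith [norm_nonneg u]
  simpa [sub_eq_zero] using hsq.antisymm (sq_nonneg _)

theorem ContinuousLinearMap.apply_eq_self_of_adjoint_apply_eq_self [CompleteSpace E]
    {T : E →L[𝕜] E} (hT : ‖T‖ ≤ 1) {v : E} (hv : adjoint T v = v) : T v = v := by
  refine eq_of_norm_le_of_re_inner_eq_norm_sq (𝕜 := 𝕜) ?_ ?_
  · simpa using T.le_of_opNorm_le hT v
  · rw [← adjoint_inner_left, hv, inner_self_eq_norm_sq]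

theorem ContinuousLinearMap.adjoint_apply_eq_self_iff [CompleteSpace E]
    {T : E →L[𝕜] E} (hT : ‖T‖ ≤ 1) (v : E) : adjoint T v = v ↔ T v = v := by
  refine ⟨apply_eq_self_of_adjoint_apply_eq_self hT, fun hv => ?_⟩
  refine apply_eq_self_of_adjoint_apply_eq_self (T := adjoint T) ?_ ?_
  · rwa [LinearIsometryEquiv.norm_map]
  · rwa [adjoint_adjoint]

end InnerProduct

theorem Continuous.eq_zero_of_integral_eq_zero_of_nonneg {X : Type*} [TopologicalSpace X]
    [MeasurableSpace X] [OpensMeasurableSpace X] {μ : Measure X} {f : X → ℝ}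
    (hf : Continuous f) (hf_nonneg : 0 ≤ f) (hf_int : Integrable f μ) (h : ∫ x, f x ∂μ = 0)
    {x : X} (hx : x ∈ μ.support) : f x = 0 := by
  by_contra hfx
  have hopen : IsOpen (Function.support f) := isOpen_ne.preimage hf
  have := (integral_pos_iff_support_of_nonneg hf_nonneg hf_int).mpr
    ((Measure.mem_support_iff_forall x).mp hx _ (hopen.mem_nhds hfx))
  exact this.ne' h

section Representation

variable {G 𝕜 V : Type*} [Group G] [TopologicalSpace G]
  [NontriviallyNormedField 𝕜] [NormedAddCommGroup V] [NormedSpace 𝕜 V]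
  {ρ : G → V →L[𝕜] V}

theorem forall_apply_eq_of_forall_mem_apply_eq [IsTopologicalGroup G]
    (hρ_cont : Continuous ρ) (hρ_one : ρ 1 = 1) (hρ_mul : ∀ g h : G, ρ (g * h) = ρ g ∘L ρ h)
    {S : Set G} (hS : (Subgroup.closure S).topologicalClosure = ⊤) {v : V}
    (hv : ∀ s ∈ S, ρ s v = v) (g : G) : ρ g v = v := by
  let H : Subgroup G :=
    { carrier := {g | ρ g v = v}
      one_mem' := by simp [hρ_one]
      mul_mem' := fun {a b} (ha : ρ a v = v) (hb : ρ b v = v) => by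
        rw [Set.mem_ofPred_eq, hρ_mul, comp_apply, hb, ha]
      inv_mem' := fun {a} (ha : ρ a v = v) => by
        calc ρ a⁻¹ v = ρ a⁻¹ (ρ a v) := by rw [ha]
          _ = v := by rw [← comp_apply, ← hρ_mul, inv_mul_cancel, hρ_one, one_apply_eq_self] }
  have hH : IsClosed (H : Set G) := isClosed_singleton.preimage (hρ_cont.clm_apply continuous_const)
  have := Subgroup.topologicalClosure_minimal _ ((Subgroup.closure_le H).mpr hv) hH
  exact (hS ▸ this) (Subgroup.mem_top g)

end Representation

section MomentOperator

variable {G V : Type*} [MeasurableSpace G] [NormedAddCommGroup V] [InnerProductSpace ℂ V]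
  {ρ : G → V →L[ℂ] V} {ν : Measure G}

theorem norm_integral_le_one_of_norm_le_one [IsProbabilityMeasure ν] (hρ_le : ∀ g, ‖ρ g‖ ≤ 1) :
    ‖∫ g, ρ g ∂ν‖ ≤ 1 :=
  (norm_integral_le_of_norm_le_const (ae_of_all _ hρ_le)).trans (by simp)

variable [TopologicalSpace G] [OpensMeasurableSpace G] [FiniteDimensional ℂ V]

theorem Continuous.integrable_of_norm_le_one [IsFiniteMeasure ν] (hρ_cont : Continuous ρ)
    (hρ_le : ∀ g, ‖ρ g‖ ≤ 1) : Integrable ρ ν :=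
  .of_bound hρ_cont.aestronglyMeasurable 1 (ae_of_all _ hρ_le)

theorem integral_re_inner_apply [IsFiniteMeasure ν] (hρ_cont : Continuous ρ)
    (hρ_le : ∀ g, ‖ρ g‖ ≤ 1) (v : V) :
    ∫ g, RCLike.re ⟪v, ρ g v⟫_ℂ ∂ν = RCLike.re ⟪v, (∫ g, ρ g ∂ν) v⟫_ℂ := by
  have hρ_int := hρ_cont.integrable_of_norm_le_one (ν := ν) hρ_le
  rw [integral_re ((hρ_int.apply_continuousLinearMap v).const_inner v),
    integral_inner (hρ_int.apply_continuousLinearMap v), integral_apply hρ_int]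

theorem apply_eq_self_of_integral_apply_eq_self [IsProbabilityMeasure ν]
    (hρ_cont : Continuous ρ) (hρ_le : ∀ g, ‖ρ g‖ ≤ 1) {v : V} (hv : (∫ g, ρ g ∂ν) v = v)
    {s : G} (hs : s ∈ ν.support) : ρ s v = v := by
  have hρv_le (g : G) : ‖ρ g v‖ ≤ ‖v‖ := by simpa using (ρ g).le_of_opNorm_le (hρ_le g) v
  have hre_int : Integrable (fun g => RCLike.re ⟪v, ρ g v⟫_ℂ) ν :=
    (((hρ_cont.integrable_of_norm_le_one hρ_le).apply_continuousLinearMap v).const_inner v).re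
  set f : G → ℝ := fun g => ‖v‖ ^ 2 - RCLike.re ⟪v, ρ g v⟫_ℂ
  have hf_cont : Continuous f := by fun_prop
  have hf_nonneg : 0 ≤ f := fun g => sub_nonneg.mpr <| calc
    RCLike.re ⟪v, ρ g v⟫_ℂ ≤ ‖v‖ * ‖ρ g v‖ := re_inner_le_norm _ _
    _ ≤ ‖v‖ ^ 2 := by nlinarith [hρv_le g, norm_nonneg v]
  have hf_zero : ∫ g, f g ∂ν = 0 := by
    rw [integral_sub (integrable_const _) hre_int, integral_re_inner_apply hρ_cont hρ_le, hv,
      inner_self_eq_norm_sq]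
    simp
  refine eq_of_norm_le_of_re_inner_eq_norm_sq (𝕜 := ℂ) (hρv_le s) ?_
  linarith [hf_cont.eq_zero_of_integral_eq_zero_of_nonneg hf_nonneg
    ((integrable_const _).sub hre_int) hf_zero hs]

theorem integral_apply_eq_self_iff [IsProbabilityMeasure ν] [Group G] [IsTopologicalGroup G]
    (hρ_cont : Continuous ρ) (hρ_one : ρ 1 = 1) (hρ_mul : ∀ g h : G, ρ (g * h) = ρ g ∘L ρ h)
    (hρ_le : ∀ g, ‖ρ g‖ ≤ 1) {S : Set G} (hS_gen : (Subgroup.closure S).topologicalClosure = ⊤)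
    (hS_supp : S ⊆ ν.support) (v : V) : (∫ g, ρ g ∂ν) v = v ↔ ∀ g, ρ g v = v := by
  refine ⟨fun hv => forall_apply_eq_of_forall_mem_apply_eq hρ_cont hρ_one hρ_mul hS_gen
    fun s hs => apply_eq_self_of_integral_apply_eq_self hρ_cont hρ_le hv (hS_supp hs), fun hv => ?_⟩
  simp [integral_apply (hρ_cont.integrable_of_norm_le_one hρ_le), hv]

end MomentOperator

theorem moment_operator_fixed_space_eq_group_fixed_space_general
    {G : Type*} [Group G] [TopologicalSpace G] [IsTopologicalGroup G]
    [MeasurableSpace G] [BorelSpace G]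
    {V : Type*} [NormedAddCommGroup V] [InnerProductSpace ℂ V] [FiniteDimensional ℂ V]
    (ρ : G → V →L[ℂ] V)
    (hρ_cont : Continuous ρ)
    (hρ_one : ρ 1 = 1)
    (hρ_mul : ∀ g h : G, ρ (g * h) = ρ g ∘L ρ h)
    (hρ_unitary : ∀ g : G, ρ g ∈ unitary (V →L[ℂ] V))
    (ν : Measure G) [IsProbabilityMeasure ν]
    (S : Set G)
    (hS_gen : (Subgroup.closure S).topologicalClosure = ⊤)
    (hS_supp : ∀ s ∈ S, ∀ U : Set G, IsOpen U → s ∈ U → 0 < ν U)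
    (M : V →L[ℂ] V) (hM : M = ∫ g, ρ g ∂ν) :
    {v : V | M v = v} = {v : V | ∀ g : G, ρ g v = v} ∧
      {v : V | ContinuousLinearMap.adjoint M v = v} = {v : V | ∀ g : G, ρ g v = v} := by
  have hρ_le (g : G) : ‖ρ g‖ ≤ 1 := (ρ g).opNorm_le_bound zero_le_one fun x => by
    rw [norm_map_of_mem_unitary (hρ_unitary g), one_mul]
  have hS_support : S ⊆ ν.support := fun s hs => by
    rw [Measure.support_eq_forall_isOpen]
    exact fun U hsU hU => hS_supp s hs U hU hsU
  have hM_fix (v : V) : M v = v ↔ ∀ g, ρ g v = v :=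
    hM ▸ integral_apply_eq_self_iff hρ_cont hρ_one hρ_mul hρ_le hS_gen hS_support v
  have hM_le : ‖M‖ ≤ 1 := hM ▸ norm_integral_le_one_of_norm_le_one hρ_le
  exact ⟨Set.ext hM_fix, Set.ext fun v => (adjoint_apply_eq_self_iff hM_le v).trans (hM_fix v)⟩

/-- **Fixed spaces of the moment operator for measures supported on generators.**
Let `ρ` be a continuous unitary representation of a compact group `G` on a
finite-dimensional complex inner product space `V`, and let `ν` be a Borel probability
measure on `G`.  Suppose there is a set `S ⊆ G` whose generated subgroup is dense in `G`
and such that every open neighborhood of every point of `S` has positive `ν`-measure.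
Then the `1`-eigenspace of `M = ∫ ρ(g) dν(g)`, the `1`-eigenspace of its adjoint, and the
`G`-fixed-point space all coincide. -/
theorem moment_operator_fixed_space_eq_group_fixed_space
    {G : Type*} [Group G] [TopologicalSpace G] [IsTopologicalGroup G] [CompactSpace G]
    [MeasurableSpace G] [BorelSpace G]
    {V : Type*} [NormedAddCommGroup V] [InnerProductSpace ℂ V] [FiniteDimensional ℂ V]
    (ρ : G → V →L[ℂ] V)
    (hρ_cont : Continuous ρ)
    (hρ_one : ρ 1 = 1)
    (hρ_mul : ∀ g h : G, ρ (g * h) = ρ g ∘L ρ h)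
    (hρ_unitary : ∀ g : G, ρ g ∈ unitary (V →L[ℂ] V))
    (ν : Measure G) [IsProbabilityMeasure ν]
    (S : Set G)
    (hS_gen : (Subgroup.closure S).topologicalClosure = ⊤)
    (hS_supp : ∀ s ∈ S, ∀ U : Set G, IsOpen U → s ∈ U → 0 < ν U)
    (M : V →L[ℂ] V) (hM : M = ∫ g, ρ g ∂ν) :
    {v : V | M v = v} = {v : V | ∀ g : G, ρ g v = v} ∧
      {v : V | ContinuousLinearMap.adjoint M v = v} = {v : V | ∀ g : G, ρ g v = v} :=
  moment_operator_fixed_space_eq_group_fixed_space_general ρ hρ_cont hρ_one hρ_mul hρ_unitary ν S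
    hS_gen hS_supp M hM
end

section
/- Let Δ ∈ (0,1), δ ∈ [0, Δ/4), c > 0, p ∈ (0,1], F > 0 and γ > 0. If m ∈ ℕ satisfies m ≥ (log c + (1/2)·log p + log g(δ/Δ) + log(1/F) + log(1/γ)) / ((1 − 4δ/Δ)·Δ), then c·√p·g(δ/Δ)·(1 − Δ + 2δ)^m ≤ γ·F·(1 − 2δ)^m. -/
/-- The function `g(x) = (1 - 4x)·x + (1 + x)/(1 - 4x)` from the filtered RB
sequence-length bounds. -/
noncomputable def gRB (x : ℝ) : ℝ := (1 - 4 * x) * x + (1 + x) / (1 - 4 * x)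

/-- **Relative-error sequence-length bound for filtered randomized benchmarking.**
If `Δ ∈ (0,1)`, `δ ∈ [0, Δ/4)`, `c > 0`, `p ∈ (0,1]`, `F > 0`, `γ > 0` and
`m ≥ (log c + ½ log p + log g(δ/Δ) + log(1/F) + log(1/γ)) / ((1 − 4δ/Δ)·Δ)`, then
`c·√p·g(δ/Δ)·(1 − Δ + 2δ)^m ≤ γ·F·(1 − 2δ)^m`. -/
theorem filteredRB_relative_sequence_length_bound
    (Δ δ c p F γ : ℝ) (m : ℕ)
    (hΔ0 : 0 < Δ) (hΔ1 : Δ < 1) (hδ0 : 0 ≤ δ) (hδ : δ < Δ / 4)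
    (hc : 0 < c) (hp0 : 0 < p) (hp1 : p ≤ 1) (hF : 0 < F) (hγ : 0 < γ)
    (hm : (Real.log c + (1 / 2) * Real.log p + Real.log (gRB (δ / Δ))
            + Real.log (1 / F) + Real.log (1 / γ)) / ((1 - 4 * δ / Δ) * Δ) ≤ (m : ℝ)) :
    c * Real.sqrt p * gRB (δ / Δ) * (1 - Δ + 2 * δ) ^ m ≤ γ * F * (1 - 2 * δ) ^ m := by
  have hΔne : Δ ≠ 0 := ne_of_gt hΔ0
  have ht : 0 < Δ - 4 * δ := by linarith
  have hδ14 : δ < 1 / 4 := by linarith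
  have h1 : 0 < 1 - 2 * δ := by linarith
  have h2 : 0 < 1 - Δ + 2 * δ := by linarith
  have hxden : 0 < 1 - 4 * (δ / Δ) := by
    have : 1 - 4 * (δ / Δ) = (Δ - 4 * δ) / Δ := by field_simp
    rw [this]; positivity
  have hx0 : 0 ≤ δ / Δ := by positivity
  have hg : 0 < gRB (δ / Δ) := by
    unfold gRB
    have h1' : 0 ≤ (1 - 4 * (δ / Δ)) * (δ / Δ) := by positivity
    have h2' : 0 < (1 + δ / Δ) / (1 - 4 * (δ / Δ)) := by positivity
    linarith
  have hcoef : (1 - 4 * δ / Δ) * Δ = Δ - 4 * δ := by field_simp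
  rw [hcoef] at hm
  have hK : Real.log c + (1 / 2) * Real.log p + Real.log (gRB (δ / Δ))
      + Real.log (1 / F) + Real.log (1 / γ) ≤ (m : ℝ) * (Δ - 4 * δ) := by
    have := (div_le_iff₀ ht).mp hm
    linarith
  -- per-step log inequality
  have hstep : Real.log (1 - Δ + 2 * δ) ≤ Real.log (1 - 2 * δ) - (Δ - 4 * δ) := by
    have hr : Real.log ((1 - Δ + 2 * δ) / (1 - 2 * δ)) ≤
        (1 - Δ + 2 * δ) / (1 - 2 * δ) - 1 :=
      Real.log_le_sub_one_of_pos (by positivity)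
    have hratio : (1 - Δ + 2 * δ) / (1 - 2 * δ) - 1 ≤ -(Δ - 4 * δ) := by
      rw [div_sub_one (ne_of_gt h1), div_le_iff₀ h1]
      nlinarith
    have hlogdiv : Real.log ((1 - Δ + 2 * δ) / (1 - 2 * δ)) =
        Real.log (1 - Δ + 2 * δ) - Real.log (1 - 2 * δ) :=
      Real.log_div (ne_of_gt h2) (ne_of_gt h1)
    linarith [hr, hratio, hlogdiv.symm.le, hlogdiv.le]
  have hmstep : (m : ℝ) * Real.log (1 - Δ + 2 * δ) ≤
      (m : ℝ) * (Real.log (1 - 2 * δ) - (Δ - 4 * δ)) :=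
    mul_le_mul_of_nonneg_left hstep (Nat.cast_nonneg m)
  -- reduce to log inequality
  have hLpos : 0 < c * Real.sqrt p * gRB (δ / Δ) * (1 - Δ + 2 * δ) ^ m := by positivity
  have hRpos : 0 < γ * F * (1 - 2 * δ) ^ m := by positivity
  rw [← Real.log_le_log_iff hLpos hRpos]
  rw [Real.log_mul (by positivity) (by positivity),
      Real.log_mul (by positivity) (by positivity),
      Real.log_mul (by positivity) (by positivity),
      Real.log_mul (by positivity) (by positivity),
      Real.log_pow, Real.log_pow, Real.log_sqrt hp0.le,
      Real.log_mul (ne_of_gt hγ) (ne_of_gt hF)]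
  have hF' : Real.log (1 / F) = -Real.log F := by rw [one_div, Real.log_inv]
  have hγ' : Real.log (1 / γ) = -Real.log γ := by rw [one_div, Real.log_inv]
  rw [hF', hγ'] at hK
  have : Real.log p / 2 = (1 / 2) * Real.log p := by ring
  rw [this]
  nlinarith [hK, hmstep]
end

section
/- Let G be a compact subgroup of U(d) with Haar probability measure μ_G, write ω(g)(X) := U_g X U_g* for g ∈ G (U_g the unitary matrix of g), and let E_x := |x⟩⟨x| for the standard basis, x = 1,…,d. Assume that for every x there exists g ∈ G with U_g E_1 U_g* = E_x (the measurement basis is generated by gates from G acting on E_1). Let Q be a positive semidefinite linear operator on M_d(ℂ) ⊗ M_d(ℂ) (self-adjoint with nonnegative quadratic form for the Hilbert–Schmidt inner product) that commutes with ω(g) ⊗ ω(g) for every g ∈ G. Then the quantity Σ_{x=1}^d ∫_G ⟨E_1 ⊗ E_1, Q((U_g* E_x U_g) ⊗ (U_g* E_x U_g))⟩ · ⟨x| U_g E_1 U_g* |x⟩ dμ_G(g) is a nonnegative real number. (In particular this applies to Q = P_σ^{(2)} (S⁺)^{⊗2}, the product of an isotypic projector of ω⊗ω with the tensor square of the pseudoinverse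 of the frame operator, yielding tr(C_σ)_ideal ≥ 0 for every irrep σ.) -/
open MeasureTheory Matrix
open scoped Matrix.Norms.L2Operator Kronecker

/-!
Substituting `g ↦ k g` for a gate `k` with `U_k E₁ U_k* = E_x` shows that all `d` summands
equal the one for `x = 1`.  Writing its weight `⟨1|U_g E₁ U_g*|1⟩` as a Hilbert–Schmidt pairing in
a third tensor factor, that summand becomes `∫ ⟨R_g w R_g*, (id ⊗ Q) w⟩ dν(g)` for
`R_g = U_g ⊗ U_g ⊗ U_g` and `w = E₁ ⊗ E₁ ⊗ E₁`, i.e. `⟨M, (id ⊗ Q) w⟩` for the twirl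
`M = ∫ R_g w R_g* dν(g)`.  As `M` is `R`-invariant and `id ⊗ Q` commutes with conjugation by `R`,
averaging `⟨M, (id ⊗ Q) w⟩` over `G` gives `⟨M, (id ⊗ Q) M⟩`, which is `≥ 0` because `id ⊗ Q`
is positive.
-/

open scoped ComplexOrder

namespace Matrix

variable {𝕜 n : Type*} [RCLike 𝕜]

theorem star_trace_conjTranspose_mul [Fintype n] (X Y : Matrix n n 𝕜) :
    star (Xᴴ * Y).trace = (Yᴴ * X).trace := by
  rw [← trace_conjTranspose, conjTranspose_mul, conjTranspose_conjTranspose]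

theorem trace_conjTranspose_mul_conj [Fintype n] (M V X : Matrix n n 𝕜) :
    (Mᴴ * (V * X * Vᴴ)).trace = ((Vᴴ * M * V)ᴴ * X).trace := by
  rw [← Matrix.mul_assoc, trace_mul_comm]
  simp only [conjTranspose_mul, conjTranspose_conjTranspose, Matrix.mul_assoc]

theorem trace_conjTranspose_kronecker_mul {m : Type*} [Fintype m] [Fintype n]
    (A C : Matrix m m 𝕜) (B D : Matrix n n 𝕜) :
    ((A ⊗ₖ B)ᴴ * (C ⊗ₖ D)).trace = (Aᴴ * C).trace * (Bᴴ * D).trace := by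
  rw [conjTranspose_kronecker, ← mul_kronecker_mul, trace_kronecker]

theorem trace_conjTranspose_mul_apply_nonneg [Fintype n] {Q : Matrix n n 𝕜 →ₗ[𝕜] Matrix n n 𝕜}
    (hQ_selfAdjoint : ∀ A B, ((Q A)ᴴ * B).trace = (Aᴴ * Q B).trace)
    (hQ_nonneg : ∀ A, 0 ≤ RCLike.re (Aᴴ * Q A).trace) (A : Matrix n n 𝕜) :
    0 ≤ (Aᴴ * Q A).trace := by
  refine RCLike.nonneg_iff.mpr ⟨hQ_nonneg A, RCLike.conj_eq_iff_im.mp ?_⟩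
  rw [starRingEnd_apply, star_trace_conjTranspose_mul, hQ_selfAdjoint]

section Unitary

variable [Fintype n] [DecidableEq n] {U : Matrix n n 𝕜}

theorem conjTranspose_mul_mul_eq_of_mul_mul_conjTranspose_eq (hU : U ∈ unitaryGroup n 𝕜)
    {A B : Matrix n n 𝕜} (h : U * A * Uᴴ = B) : Uᴴ * B * U = A := by
  have hUU : Uᴴ * U = 1 := mem_unitaryGroup_iff'.mp hU
  rw [← h, Matrix.mul_assoc, Matrix.mul_assoc, hUU, Matrix.mul_one, ← Matrix.mul_assoc, hUU,
    Matrix.one_mul]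

theorem map_conjTranspose_mul_mul (hU : U ∈ unitaryGroup n 𝕜)
    {Q : Matrix n n 𝕜 →ₗ[𝕜] Matrix n n 𝕜} (hQ : ∀ A, Q (U * A * Uᴴ) = U * Q A * Uᴴ)
    (A : Matrix n n 𝕜) : Q (Uᴴ * A * U) = Uᴴ * Q A * U := by
  have hUU : U * Uᴴ = 1 := mem_unitaryGroup_iff.mp hU
  refine (conjTranspose_mul_mul_eq_of_mul_mul_conjTranspose_eq hU ?_).symm
  rw [← hQ, ← Matrix.mul_assoc, ← Matrix.mul_assoc, hUU, Matrix.one_mul, Matrix.mul_assoc, hUU,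
    Matrix.mul_one]

theorem conj_apply_of_conj_single_eq (hU : U ∈ unitaryGroup n 𝕜) {i x : n}
    (h : U * single i i 1 * Uᴴ = single x x 1) (M : Matrix n n 𝕜) :
    (U * M * Uᴴ) x x = M i i := by
  calc (U * M * Uᴴ) x x = (single x x 1 * (U * M * Uᴴ)).trace := by
        rw [trace_single_mul, one_smul]
    _ = (Uᴴ * single x x 1 * U * M).trace := by
        rw [show single x x 1 * (U * M * Uᴴ) = single x x 1 * U * M * Uᴴ by
          simp only [Matrix.mul_assoc], trace_mul_comm]
        simp only [Matrix.mul_assoc]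
    _ = M i i := by
        rw [conjTranspose_mul_mul_eq_of_mul_mul_conjTranspose_eq hU h, trace_single_mul, one_smul]

end Unitary

noncomputable def kroneckerLTensor (m : Type*) (Q : Matrix n n 𝕜 →ₗ[𝕜] Matrix n n 𝕜) :
    Matrix (m × n) (m × n) 𝕜 →ₗ[𝕜] Matrix (m × n) (m × n) 𝕜 :=
  (compLinearEquiv m m n n 𝕜 𝕜).conj Q.mapMatrix

variable {m : Type*}

theorem comp_symm_kroneckerLTensor (Q : Matrix n n 𝕜 →ₗ[𝕜] Matrix n n 𝕜)
    (X : Matrix (m × n) (m × n) 𝕜) (i j : m) :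
    (comp m m n n 𝕜).symm (kroneckerLTensor m Q X) i j = Q ((comp m m n n 𝕜).symm X i j) :=
  rfl

theorem kroneckerLTensor_kronecker (Q : Matrix n n 𝕜 →ₗ[𝕜] Matrix n n 𝕜)
    (C : Matrix m m 𝕜) (A : Matrix n n 𝕜) :
    kroneckerLTensor m Q (C ⊗ₖ A) = C ⊗ₖ Q A := by
  have hblock : ∀ i j, (comp m m n n 𝕜).symm (C ⊗ₖ A) i j = C i j • A := fun i j => by
    ext; simp
  ext ⟨i, a⟩ ⟨j, b⟩
  exact congrFun₂ (comp_symm_kroneckerLTensor Q (C ⊗ₖ A) i j) a b |>.trans (by simp [hblock])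

theorem kroneckerLTensor_conj_kronecker [Fintype m] [Fintype n] [DecidableEq m] [DecidableEq n]
    {Q : Matrix n n 𝕜 →ₗ[𝕜] Matrix n n 𝕜} {V : Matrix n n 𝕜}
    (hQV : ∀ A, Q (V * A * Vᴴ) = V * Q A * Vᴴ) (u : Matrix m m 𝕜)
    (X : Matrix (m × n) (m × n) 𝕜) :
    kroneckerLTensor m Q ((u ⊗ₖ V) * X * (u ⊗ₖ V)ᴴ)
      = (u ⊗ₖ V) * kroneckerLTensor m Q X * (u ⊗ₖ V)ᴴ := by
  have conj_kronecker : ∀ (C : Matrix m m 𝕜) (A : Matrix n n 𝕜),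
      (u ⊗ₖ V) * (C ⊗ₖ A) * (u ⊗ₖ V)ᴴ = (u * C * uᴴ) ⊗ₖ (V * A * Vᴴ) := fun C A => by
    rw [conjTranspose_kronecker, mul_kronecker_mul, mul_kronecker_mul]
  induction X using Matrix.induction_on' with
  | h_zero => simp
  | h_add X Y hX hY => simp only [Matrix.mul_add, Matrix.add_mul, map_add, hX, hY]
  | h_std_basis p q x =>
    rw [← mul_one x, ← single_kronecker_single p.1 q.1 p.2 q.2, conj_kronecker,
      kroneckerLTensor_kronecker, kroneckerLTensor_kronecker, hQV, conj_kronecker]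

theorem trace_conjTranspose_mul_eq_sum_blocks [Fintype m] [Fintype n]
    (X Y : Matrix (m × n) (m × n) 𝕜) :
    (Xᴴ * Y).trace = ∑ i, ∑ j,
      (((comp m m n n 𝕜).symm X i j)ᴴ * (comp m m n n 𝕜).symm Y i j).trace := by
  simp only [trace, diag, mul_apply, conjTranspose_apply, Fintype.sum_prod_type, comp_symm_apply]
  conv_lhs => arg 2; ext x; rw [Finset.sum_comm]
  exact Finset.sum_comm

theorem trace_conjTranspose_mul_kroneckerLTensor_nonneg [Fintype m] [Fintype n]
    {Q : Matrix n n 𝕜 →ₗ[𝕜] Matrix n n 𝕜} (hQ : ∀ A, 0 ≤ (Aᴴ * Q A).trace)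
    (X : Matrix (m × n) (m × n) 𝕜) :
    0 ≤ (Xᴴ * kroneckerLTensor m Q X).trace := by
  rw [trace_conjTranspose_mul_eq_sum_blocks]
  exact Finset.sum_nonneg fun i _ => Finset.sum_nonneg fun j _ => by
    rw [comp_symm_kroneckerLTensor]
    exact hQ _

end Matrix

theorem Continuous.matrix_kronecker {X R l m n p : Type*} [TopologicalSpace X] [Mul R]
    [TopologicalSpace R] [ContinuousMul R] {A : X → Matrix l m R} {B : X → Matrix n p R}
    (hA : Continuous A) (hB : Continuous B) : Continuous fun x => A x ⊗ₖ B x :=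
  continuous_matrix fun _ _ => (hA.matrix_elem _ _).mul (hB.matrix_elem _ _)

theorem LinearMap.integral_comp_comm_of_finiteDimensional {𝕜 E F X : Type*} [RCLike 𝕜]
    [NormedAddCommGroup E] [NormedSpace ℝ E] [NormedSpace 𝕜 E] [FiniteDimensional 𝕜 E]
    [NormedAddCommGroup F] [NormedSpace ℝ F] [NormedSpace 𝕜 F] [CompleteSpace F]
    [MeasurableSpace X] {μ : Measure X} (L : E →ₗ[𝕜] F) {φ : X → E} (hφ : Integrable φ μ) :
    ∫ x, L (φ x) ∂μ = L (∫ x, φ x ∂μ) :=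
  have := FiniteDimensional.complete 𝕜 E
  (LinearMap.toContinuousLinearMap L).integral_comp_comm hφ

section Twirl

variable {ι G : Type*} [Fintype ι] [DecidableEq ι] [TopologicalSpace G] [MeasurableSpace G]

noncomputable def twirl (ν : Measure G) (R : G → Matrix ι ι ℂ) (w : Matrix ι ι ℂ) :
    Matrix ι ι ℂ :=
  ∫ g, R g * w * (R g)ᴴ ∂ν

variable {ν : Measure G} {R : G → Matrix ι ι ℂ}

theorem integrable_conj [CompactSpace G] [OpensMeasurableSpace G] [IsFiniteMeasure ν]
    (hR : Continuous R) (w : Matrix ι ι ℂ) :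
    Integrable (fun g => R g * w * (R g)ᴴ) ν :=
  ((hR.matrix_mul continuous_const).matrix_mul hR.matrix_conjTranspose)
    |>.integrable_of_hasCompactSupport (HasCompactSupport.of_compactSpace _)

theorem integral_trace_conj_conjTranspose_mul [CompactSpace G] [OpensMeasurableSpace G]
    [IsFiniteMeasure ν] (hR_cont : Continuous R) (w B : Matrix ι ι ℂ) :
    ∫ g, ((R g * w * (R g)ᴴ)ᴴ * B).trace ∂ν = ((twirl ν R w)ᴴ * B).trace := by
  let pairB : Matrix ι ι ℂ →ₗ[ℂ] ℂ := traceLinearMap ι ℂ ℂ ∘ₗ LinearMap.mulLeft ℂ Bᴴ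
  have hpairB : ∀ X, (Xᴴ * B).trace = starRingEnd ℂ (pairB X) := fun X => by
    simp only [pairB, LinearMap.comp_apply, LinearMap.mulLeft_apply, traceLinearMap_apply,
      starRingEnd_apply, star_trace_conjTranspose_mul]
  simp only [hpairB]
  rw [integral_conj, pairB.integral_comp_comm_of_finiteDimensional (integrable_conj hR_cont w),
    twirl]

variable [Group G] [IsTopologicalGroup G] [CompactSpace G] [BorelSpace G] [ν.IsMulLeftInvariant]

theorem conj_twirl [IsFiniteMeasure ν] (hR_cont : Continuous R)
    (hR_mul : ∀ g h, R (g * h) = R g * R h) (w : Matrix ι ι ℂ) (k : G) :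
    R k * twirl ν R w * (R k)ᴴ = twirl ν R w := by
  let conjR : Matrix ι ι ℂ →ₗ[ℂ] Matrix ι ι ℂ :=
    LinearMap.mulLeft ℂ (R k) ∘ₗ LinearMap.mulRight ℂ (R k)ᴴ
  have hconj : ∀ g, conjR (R g * w * (R g)ᴴ) = R (k * g) * w * (R (k * g))ᴴ := fun g => by
    simp [conjR, hR_mul, Matrix.mul_assoc]
  calc R k * twirl ν R w * (R k)ᴴ = conjR (twirl ν R w) := by simp [conjR, Matrix.mul_assoc]
    _ = ∫ g, R (k * g) * w * (R (k * g))ᴴ ∂ν := by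
      rw [twirl, ← conjR.integral_comp_comm_of_finiteDimensional (integrable_conj hR_cont w)]
      simp only [hconj]
    _ = twirl ν R w := integral_mul_left_eq_self (fun g => R g * w * (R g)ᴴ) k

theorem integral_trace_conj_conjTranspose_mul_eq_trace_twirl [IsProbabilityMeasure ν]
    (hR_cont : Continuous R) (hR_mul : ∀ g h, R (g * h) = R g * R h)
    (hR_unitary : ∀ g, R g ∈ unitaryGroup ι ℂ) {Φ : Matrix ι ι ℂ →ₗ[ℂ] Matrix ι ι ℂ}
    (hΦ : ∀ g A, Φ (R g * A * (R g)ᴴ) = R g * Φ A * (R g)ᴴ) (w : Matrix ι ι ℂ) :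
    ∫ g, ((R g * w * (R g)ᴴ)ᴴ * Φ w).trace ∂ν = ((twirl ν R w)ᴴ * Φ (twirl ν R w)).trace := by
  set M := twirl ν R w
  have hM : ∀ g, (R g)ᴴ * M * R g = M := fun g =>
    conjTranspose_mul_mul_eq_of_mul_mul_conjTranspose_eq (hR_unitary g)
      (conj_twirl hR_cont hR_mul w g)
  let pairΦ : Matrix ι ι ℂ →ₗ[ℂ] ℂ := traceLinearMap ι ℂ ℂ ∘ₗ LinearMap.mulLeft ℂ Mᴴ ∘ₗ Φ
  calc ∫ g, ((R g * w * (R g)ᴴ)ᴴ * Φ w).trace ∂ν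
      = (Mᴴ * Φ w).trace := integral_trace_conj_conjTranspose_mul hR_cont w _
    _ = ∫ g, pairΦ (R g * w * (R g)ᴴ) ∂ν := by
        simp [pairΦ, hΦ, trace_conjTranspose_mul_conj, hM]
    _ = (Mᴴ * Φ M).trace :=
        pairΦ.integral_comp_comm_of_finiteDimensional (integrable_conj hR_cont w)

end Twirl

section Representation

variable {n G : Type*} [Fintype n] [DecidableEq n] [Group G] [MeasurableSpace G]
  {ν : Measure G} {U : G → Matrix n n ℂ}

theorem integral_conj_single_term_eq [MeasurableMul G] [ν.IsMulLeftInvariant]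
    (hU_mul : ∀ g h, U (g * h) = U g * U h) (hU_unitary : ∀ g, U g ∈ unitaryGroup n ℂ)
    (Ψ : Matrix n n ℂ → ℂ) {i x : n} {k : G}
    (hk : U k * single i i (1 : ℂ) * (U k)ᴴ = single x x (1 : ℂ)) :
    ∫ g, Ψ ((U g)ᴴ * single x x (1 : ℂ) * U g) * (U g * single i i (1 : ℂ) * (U g)ᴴ) x x ∂ν
      = ∫ g, Ψ ((U g)ᴴ * single i i (1 : ℂ) * U g)
          * (U g * single i i (1 : ℂ) * (U g)ᴴ) i i ∂ν := by
  have hproj : ∀ g, (U (k * g))ᴴ * single x x (1 : ℂ) * U (k * g)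
      = (U g)ᴴ * single i i (1 : ℂ) * U g := fun g => by
    rw [hU_mul, conjTranspose_mul,
      ← conjTranspose_mul_mul_eq_of_mul_mul_conjTranspose_eq (hU_unitary k) hk]
    simp only [Matrix.mul_assoc]
  have hentry : ∀ g, (U (k * g) * single i i (1 : ℂ) * (U (k * g))ᴴ) x x
      = (U g * single i i (1 : ℂ) * (U g)ᴴ) i i := fun g => by
    rw [← conj_apply_of_conj_single_eq (hU_unitary k) hk (U g * single i i 1 * (U g)ᴴ), hU_mul,
      conjTranspose_mul]
    simp only [Matrix.mul_assoc]
  rw [← integral_mul_left_eq_self _ k]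
  simp only [hproj, hentry]

theorem trace_mul_trace_eq_trace_conjTranspose_mul_kroneckerLTensor {𝕜 : Type*} [RCLike 𝕜]
    {Q : Matrix (n × n) (n × n) 𝕜 →ₗ[𝕜] Matrix (n × n) (n × n) 𝕜} {V : Matrix n n 𝕜}
    (hV : V ∈ unitaryGroup n 𝕜)
    (hQ : ∀ A, Q ((V ⊗ₖ V) * A * (V ⊗ₖ V)ᴴ) = (V ⊗ₖ V) * Q A * (V ⊗ₖ V)ᴴ) (P : Matrix n n 𝕜) :
    ((P ⊗ₖ P)ᴴ * Q ((Vᴴ * P * V) ⊗ₖ (Vᴴ * P * V))).trace * ((V * P * Vᴴ)ᴴ * P).trace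
      = (((V ⊗ₖ (V ⊗ₖ V)) * (P ⊗ₖ (P ⊗ₖ P)) * (V ⊗ₖ (V ⊗ₖ V))ᴴ)ᴴ
          * kroneckerLTensor n Q (P ⊗ₖ (P ⊗ₖ P))).trace := by
  set W := V ⊗ₖ V
  have hconj : (V ⊗ₖ W) * (P ⊗ₖ (P ⊗ₖ P)) * (V ⊗ₖ W)ᴴ
      = (V * P * Vᴴ) ⊗ₖ (W * (P ⊗ₖ P) * Wᴴ) := by
    rw [conjTranspose_kronecker, mul_kronecker_mul, mul_kronecker_mul]
  have hQ' : Q ((Vᴴ * P * V) ⊗ₖ (Vᴴ * P * V)) = Wᴴ * Q (P ⊗ₖ P) * W := by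
    rw [← map_conjTranspose_mul_mul (kronecker_mem_unitary hV hV) hQ, conjTranspose_kronecker,
      mul_kronecker_mul, mul_kronecker_mul]
  have hcycle := trace_conjTranspose_mul_conj (P ⊗ₖ P) Wᴴ (Q (P ⊗ₖ P))
  rw [conjTranspose_conjTranspose] at hcycle
  rw [hconj, kroneckerLTensor_kronecker, trace_conjTranspose_kronecker_mul, hQ', hcycle, mul_comm]

theorem integral_trace_mul_trace_eq_trace_twirl [TopologicalSpace G] [IsTopologicalGroup G]
    [CompactSpace G] [BorelSpace G] [IsProbabilityMeasure ν] [ν.IsMulLeftInvariant]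
    (hU_cont : Continuous U) (hU_mul : ∀ g h, U (g * h) = U g * U h)
    (hU_unitary : ∀ g, U g ∈ unitaryGroup n ℂ)
    {Q : Matrix (n × n) (n × n) ℂ →ₗ[ℂ] Matrix (n × n) (n × n) ℂ}
    (hQ : ∀ g A, Q ((U g ⊗ₖ U g) * A * (U g ⊗ₖ U g)ᴴ) = (U g ⊗ₖ U g) * Q A * (U g ⊗ₖ U g)ᴴ)
    (P : Matrix n n ℂ) :
    ∫ g, ((P ⊗ₖ P)ᴴ * Q (((U g)ᴴ * P * U g) ⊗ₖ ((U g)ᴴ * P * U g))).trace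
        * ((U g * P * (U g)ᴴ)ᴴ * P).trace ∂ν
      = let M := twirl ν (fun g => U g ⊗ₖ (U g ⊗ₖ U g)) (P ⊗ₖ (P ⊗ₖ P))
        (Mᴴ * kroneckerLTensor n Q M).trace := by
  simp only [trace_mul_trace_eq_trace_conjTranspose_mul_kroneckerLTensor (hU_unitary _) (hQ _)]
  refine integral_trace_conj_conjTranspose_mul_eq_trace_twirl
    (hU_cont.matrix_kronecker (hU_cont.matrix_kronecker hU_cont)) (fun g h => ?_) (fun g => ?_)
    (fun g => kroneckerLTensor_conj_kronecker (hQ g) (U g)) _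
  · simp only [hU_mul, mul_kronecker_mul]
  · exact kronecker_mem_unitary (hU_unitary g)
      (kronecker_mem_unitary (hU_unitary g) (hU_unitary g))

end Representation

theorem ideal_second_moment_coefficient_nonneg_general
    (d : ℕ) [NeZero d]
    {G : Type*} [Group G] [TopologicalSpace G] [IsTopologicalGroup G] [CompactSpace G]
    [MeasurableSpace G] [BorelSpace G]
    (ν : Measure G) [ν.IsHaarMeasure] [IsProbabilityMeasure ν]
    (U : G → Matrix (Fin d) (Fin d) ℂ)
    (hU_cont : Continuous U)
    (hU_mul : ∀ g h : G, U (g * h) = U g * U h)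
    (hU_unitary : ∀ g : G, U g ∈ Matrix.unitaryGroup (Fin d) ℂ)
    -- the measurement basis is generated by gates from G acting on E₁
    (hgen : ∀ x : Fin d, ∃ g : G,
      U g * Matrix.single (0 : Fin d) (0 : Fin d) (1 : ℂ) * (U g)ᴴ
        = Matrix.single x x (1 : ℂ))
    -- Q : a positive semidefinite superoperator on M_d(ℂ) ⊗ M_d(ℂ)
    (Q : Matrix (Fin d × Fin d) (Fin d × Fin d) ℂ
          →ₗ[ℂ] Matrix (Fin d × Fin d) (Fin d × Fin d) ℂ)
    (hQ_selfAdjoint : ∀ A B : Matrix (Fin d × Fin d) (Fin d × Fin d) ℂ,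
      ((Q A)ᴴ * B).trace = (Aᴴ * Q B).trace)
    (hQ_nonneg : ∀ A : Matrix (Fin d × Fin d) (Fin d × Fin d) ℂ,
      0 ≤ ((Aᴴ * Q A).trace).re)
    -- Q commutes with ω(g) ⊗ ω(g) for every g ∈ G
    (hQ_comm : ∀ (g : G) (A : Matrix (Fin d × Fin d) (Fin d × Fin d) ℂ),
      Q ((U g ⊗ₖ U g) * A * (U g ⊗ₖ U g)ᴴ)
        = (U g ⊗ₖ U g) * Q A * (U g ⊗ₖ U g)ᴴ) :
    0 ≤ (∑ x : Fin d, ∫ g,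
          ((Matrix.single (0 : Fin d) (0 : Fin d) (1 : ℂ) ⊗ₖ
              Matrix.single (0 : Fin d) (0 : Fin d) (1 : ℂ))ᴴ *
            Q (((U g)ᴴ * Matrix.single x x (1 : ℂ) * U g) ⊗ₖ
                ((U g)ᴴ * Matrix.single x x (1 : ℂ) * U g))).trace *
          ((U g * Matrix.single (0 : Fin d) (0 : Fin d) (1 : ℂ) * (U g)ᴴ) x x)
            ∂ν).re ∧
    (∑ x : Fin d, ∫ g,
          ((Matrix.single (0 : Fin d) (0 : Fin d) (1 : ℂ) ⊗ₖ
              Matrix.single (0 : Fin d) (0 : Fin d) (1 : ℂ))ᴴ *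
            Q (((U g)ᴴ * Matrix.single x x (1 : ℂ) * U g) ⊗ₖ
                ((U g)ᴴ * Matrix.single x x (1 : ℂ) * U g))).trace *
          ((U g * Matrix.single (0 : Fin d) (0 : Fin d) (1 : ℂ) * (U g)ᴴ) x x)
            ∂ν).im = 0 := by
  let E := single (0 : Fin d) (0 : Fin d) (1 : ℂ)
  set M := twirl ν (fun g => U g ⊗ₖ (U g ⊗ₖ U g)) (E ⊗ₖ (E ⊗ₖ E))
  have hentry : ∀ g, (U g * E * (U g)ᴴ) 0 0 = ((U g * E * (U g)ᴴ)ᴴ * E).trace := fun g => by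
    rw [trace_mul_single, conjTranspose_mul, conjTranspose_mul, conjTranspose_conjTranspose,
      conjTranspose_single, star_one, ← Matrix.mul_assoc, MulOpposite.op_one, one_smul]
  have hterm : ∀ x : Fin d, ∫ g, ((E ⊗ₖ E)ᴴ * Q (((U g)ᴴ * single x x (1 : ℂ) * U g) ⊗ₖ
      ((U g)ᴴ * single x x (1 : ℂ) * U g))).trace * (U g * E * (U g)ᴴ) x x ∂ν
      = (Mᴴ * kroneckerLTensor (Fin d) Q M).trace := fun x => by
    obtain ⟨k, hk⟩ := hgen x
    rw [integral_conj_single_term_eq hU_mul hU_unitary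
      (fun P => ((E ⊗ₖ E)ᴴ * Q (P ⊗ₖ P)).trace) hk]
    refine (integral_congr_ae (.of_forall fun g => ?_)).trans
      (integral_trace_mul_trace_eq_trace_twirl hU_cont hU_mul hU_unitary hQ_comm E)
    rw [hentry g]
  have hM : 0 ≤ (Mᴴ * kroneckerLTensor (Fin d) Q M).trace :=
    trace_conjTranspose_mul_kroneckerLTensor_nonneg
      (trace_conjTranspose_mul_apply_nonneg hQ_selfAdjoint hQ_nonneg) M
  rw [Finset.sum_congr rfl fun x _ => hterm x]
  simp only [Finset.sum_const, Finset.card_univ, Fintype.card_fin, nsmul_eq_mul]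
  obtain ⟨hre, him⟩ := Complex.nonneg_iff.mp (mul_nonneg (Nat.cast_nonneg d) hM)
  exact ⟨hre, him.symm⟩

/-- **Non-negativity of the ideal second-moment coefficients `tr(C_σ)_ideal`.**
Let `G` be a compact group with Haar probability measure `ν`, acting on `M_d(ℂ)` by
conjugation with unitaries `U_g`, and suppose the computational basis projectors
`E_x = |x⟩⟨x|` are generated by gates of `G` acting on `E_1`.  If `Q` is a positive
semidefinite superoperator on `M_d(ℂ) ⊗ M_d(ℂ)` (self-adjoint with nonnegative quadratic
form for the Hilbert–Schmidt inner product) commuting with `ω(g) ⊗ ω(g)` for all `g`,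
then `Σ_x ∫_G ⟨E₁⊗E₁, Q((U_g* E_x U_g) ⊗ (U_g* E_x U_g))⟩ · ⟨x|U_g E₁ U_g*|x⟩ dν(g)` is
a nonnegative real number. -/
theorem ideal_second_moment_coefficient_nonneg
    (d : ℕ) [NeZero d]
    {G : Type*} [Group G] [TopologicalSpace G] [IsTopologicalGroup G] [CompactSpace G]
    [MeasurableSpace G] [BorelSpace G]
    (ν : Measure G) [ν.IsHaarMeasure] [IsProbabilityMeasure ν]
    (U : G → Matrix (Fin d) (Fin d) ℂ)
    (hU_cont : Continuous U)
    (hU_one : U 1 = 1)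
    (hU_mul : ∀ g h : G, U (g * h) = U g * U h)
    (hU_unitary : ∀ g : G, U g ∈ Matrix.unitaryGroup (Fin d) ℂ)
    -- the measurement basis is generated by gates from G acting on E₁
    (hgen : ∀ x : Fin d, ∃ g : G,
      U g * Matrix.single (0 : Fin d) (0 : Fin d) (1 : ℂ) * (U g)ᴴ
        = Matrix.single x x (1 : ℂ))
    -- Q : a positive semidefinite superoperator on M_d(ℂ) ⊗ M_d(ℂ)
    (Q : Matrix (Fin d × Fin d) (Fin d × Fin d) ℂ
          →ₗ[ℂ] Matrix (Fin d × Fin d) (Fin d × Fin d) ℂ)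
    (hQ_selfAdjoint : ∀ A B : Matrix (Fin d × Fin d) (Fin d × Fin d) ℂ,
      ((Q A)ᴴ * B).trace = (Aᴴ * Q B).trace)
    (hQ_nonneg : ∀ A : Matrix (Fin d × Fin d) (Fin d × Fin d) ℂ,
      0 ≤ ((Aᴴ * Q A).trace).re)
    -- Q commutes with ω(g) ⊗ ω(g) for every g ∈ G
    (hQ_comm : ∀ (g : G) (A : Matrix (Fin d × Fin d) (Fin d × Fin d) ℂ),
      Q ((U g ⊗ₖ U g) * A * (U g ⊗ₖ U g)ᴴ)
        = (U g ⊗ₖ U g) * Q A * (U g ⊗ₖ U g)ᴴ) :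
    0 ≤ (∑ x : Fin d, ∫ g,
          ((Matrix.single (0 : Fin d) (0 : Fin d) (1 : ℂ) ⊗ₖ
              Matrix.single (0 : Fin d) (0 : Fin d) (1 : ℂ))ᴴ *
            Q (((U g)ᴴ * Matrix.single x x (1 : ℂ) * U g) ⊗ₖ
                ((U g)ᴴ * Matrix.single x x (1 : ℂ) * U g))).trace *
          ((U g * Matrix.single (0 : Fin d) (0 : Fin d) (1 : ℂ) * (U g)ᴴ) x x)
            ∂ν).re ∧
    (∑ x : Fin d, ∫ g,
          ((Matrix.single (0 : Fin d) (0 : Fin d) (1 : ℂ) ⊗ₖ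
              Matrix.single (0 : Fin d) (0 : Fin d) (1 : ℂ))ᴴ *
            Q (((U g)ᴴ * Matrix.single x x (1 : ℂ) * U g) ⊗ₖ
                ((U g)ᴴ * Matrix.single x x (1 : ℂ) * U g))).trace *
          ((U g * Matrix.single (0 : Fin d) (0 : Fin d) (1 : ℂ) * (U g)ᴴ) x x)
            ∂ν).im = 0 :=
  ideal_second_moment_coefficient_nonneg_general d ν U hU_cont hU_mul hU_unitary hgen Q
    hQ_selfAdjoint hQ_nonneg hQ_comm
end

section
/- Let T be a self-adjoint linear operator on a finite-dimensional complex inner product space and let P be an orthogonal projection with T P = P = P T. Let r ≥ 1 be a natural number and suppose that for every integer m ≥ 1 one has ‖T^m − P‖_HS² ≤ 2·(1 + (4/5)^{4m})^r − 2, where ‖·‖_HS is the Hilbert–Schmidt (Frobenius) norm. Then the operator norm satisfies ‖T − P‖ ≤ 16/25; equivalently, the spectral gap 1 − ‖T − P‖ is at least 9/25. -/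
open ContinuousLinearMap

/-! `A = T - P` is self-adjoint with `A ^ m = T ^ m - P` for `m ≥ 1`. Self-adjointness gives
`‖A ^ 2 ^ k‖ = ‖A‖ ^ 2 ^ k`, and the operator norm is bounded by the Hilbert–Schmidt norm, so with
`m = 2 ^ k` the hypothesis yields `‖A‖ ^ (2 m) ≤ 2 (1 + q ^ m) ^ r - 2 ≤ 2 (2 ^ r - 1) q ^ m`
for `q = (4/5) ^ 4 = (16/25) ^ 2` (convexity of `x ↦ (1 + x) ^ r` on `[0, 1]`). Letting `k → ∞`
forces `‖A‖ ≤ 16/25`. -/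

open Filter Topology in
theorem le_of_frequently_pow_le_mul_pow {a b C : ℝ} (hb : 0 ≤ b)
    (h : ∃ᶠ n in atTop, a ^ n ≤ C * b ^ n) : a ≤ b := by
  by_contra! hba
  have ha : 0 < a := hb.trans_lt hba
  have hlim : Tendsto (fun n : ℕ => C * (b / a) ^ n) atTop (𝓝 0) := by
    simpa using (tendsto_pow_atTop_nhds_zero_of_lt_one (div_nonneg hb ha.le)
      ((div_lt_one ha).2 hba)).const_mul C
  obtain ⟨n, hn, hlt⟩ := (h.and_eventually (hlim.eventually (gt_mem_nhds one_pos))).exists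
  have : C * b ^ n < a ^ n :=
    calc C * b ^ n = C * (b / a) ^ n * a ^ n := by
          rw [div_pow, mul_assoc, div_mul_cancel₀ _ (pow_pos ha n).ne']
      _ < 1 * a ^ n := by gcongr
      _ = a ^ n := one_mul _
  exact hn.not_gt this

theorem sub_pow_eq_pow_sub {R : Type*} [Ring R] {T P : R} (hTP : T * P = P) (hPT : P * T = P)
    (hP : IsIdempotentElem P) {m : ℕ} (hm : m ≠ 0) : (T - P) ^ m = T ^ m - P := by
  have hTmP : ∀ n : ℕ, T ^ n * P = P := by
    intro n
    induction n with
    | zero => rw [pow_zero, one_mul]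
    | succ n ih => rw [pow_succ, mul_assoc, hTP, ih]
  induction m with
  | zero => exact (hm rfl).elim
  | succ n ih =>
    rcases eq_or_ne n 0 with rfl | hn
    · simp
    · rw [pow_succ, ih hn, sub_mul, mul_sub, mul_sub, hTmP, hPT, hP.eq, ← pow_succ]
      abel

theorem one_add_pow_le_one_add_mul {x : ℝ} (hx₀ : 0 ≤ x) (hx₁ : x ≤ 1) (r : ℕ) :
    (1 + x) ^ r ≤ 1 + (2 ^ r - 1) * x := by
  induction r with
  | zero => simp
  | succ r ih =>
    have h2r : (1 : ℝ) ≤ 2 ^ r := one_le_pow₀ one_le_two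
    calc (1 + x) ^ (r + 1) = (1 + x) ^ r * (1 + x) := pow_succ _ _
      _ ≤ (1 + (2 ^ r - 1) * x) * (1 + x) := by gcongr
      _ ≤ 1 + (2 ^ (r + 1) - 1) * x := by
        rw [pow_succ]
        nlinarith [mul_nonneg (mul_nonneg (sub_nonneg.2 h2r) hx₀) (sub_nonneg.2 hx₁)]

section HilbertSchmidt

variable {𝕜 E ι : Type*} [RCLike 𝕜] [NormedAddCommGroup E] [InnerProductSpace 𝕜 E] [Fintype ι]

open scoped InnerProductSpace

theorem ContinuousLinearMap.re_trace_adjoint_comp_eq_sum [CompleteSpace E] (B : E →L[𝕜] E)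
    (b : OrthonormalBasis ι 𝕜 E) :
    RCLike.re (LinearMap.trace 𝕜 E (adjoint B ∘L B).toLinearMap) = ∑ i, ‖B (b i)‖ ^ 2 := by
  rw [LinearMap.trace_eq_sum_inner _ b, map_sum]
  refine Finset.sum_congr rfl fun i _ => ?_
  rw [coe_coe, comp_apply, adjoint_inner_right, inner_self_eq_norm_sq]

theorem ContinuousLinearMap.opNorm_le_sqrt_sum_sq_norm_apply (B : E →L[𝕜] E)
    (b : OrthonormalBasis ι 𝕜 E) : ‖B‖ ≤ √(∑ i, ‖B (b i)‖ ^ 2) := by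
  refine opNorm_le_bound _ (Real.sqrt_nonneg _) fun x => ?_
  calc ‖B x‖ = ‖∑ i, ⟪b i, x⟫_𝕜 • B (b i)‖ := by
        conv_lhs => rw [← b.sum_repr' x]
        simp only [map_sum, map_smul]
    _ ≤ ∑ i, ‖⟪b i, x⟫_𝕜‖ * ‖B (b i)‖ := norm_sum_le_of_le _ fun i _ => (norm_smul _ _).le
    _ ≤ √(∑ i, ‖⟪b i, x⟫_𝕜‖ ^ 2) * √(∑ i, ‖B (b i)‖ ^ 2) := Real.sum_mul_le_sqrt_mul_sqrt _ _ _
    _ = √(∑ i, ‖B (b i)‖ ^ 2) * ‖x‖ := by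
        rw [b.sum_sq_norm_inner_right, Real.sqrt_sq (norm_nonneg x), mul_comm]

theorem ContinuousLinearMap.sq_norm_le_re_trace_adjoint_comp [CompleteSpace E]
    [FiniteDimensional 𝕜 E] (B : E →L[𝕜] E) :
    ‖B‖ ^ 2 ≤ RCLike.re (LinearMap.trace 𝕜 E (adjoint B ∘L B).toLinearMap) := by
  let b := stdOrthonormalBasis 𝕜 E
  rw [re_trace_adjoint_comp_eq_sum B b]
  calc ‖B‖ ^ 2 ≤ √(∑ i, ‖B (b i)‖ ^ 2) ^ 2 :=
        pow_le_pow_left₀ (norm_nonneg B) (opNorm_le_sqrt_sum_sq_norm_apply B b) 2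
    _ = ∑ i, ‖B (b i)‖ ^ 2 := Real.sq_sqrt (by positivity)

end HilbertSchmidt

open Filter in
theorem spectral_gap_from_frame_potential_general
    {V : Type*} [NormedAddCommGroup V] [InnerProductSpace ℂ V] [FiniteDimensional ℂ V]
    (T P : V →L[ℂ] V)
    (hT_sa : IsSelfAdjoint T)
    (hP_sa : IsSelfAdjoint P) (hP_idem : P ∘L P = P)
    (hTP : T ∘L P = P) (hPT : P ∘L T = P)
    (r : ℕ)
    (hHS : ∀ m : ℕ, 1 ≤ m →
      (LinearMap.trace ℂ V
          (ContinuousLinearMap.adjoint (T ^ m - P) ∘L (T ^ m - P)).toLinearMap).re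
        ≤ 2 * (1 + (4 / 5 : ℝ) ^ (4 * m)) ^ r - 2) :
    ‖T - P‖ ≤ 16 / 25 ∧ (9 : ℝ) / 25 ≤ 1 - ‖T - P‖ := by
  have hA : IsSelfAdjoint (T - P) := hT_sa.sub hP_sa
  have hbound (k : ℕ) :
      ‖T - P‖ ^ (2 * 2 ^ k) ≤ 2 * (2 ^ r - 1) * (16 / 25 : ℝ) ^ (2 * 2 ^ k) := by
    have hq := one_add_pow_le_one_add_mul (x := (4 / 5 : ℝ) ^ (4 * 2 ^ k)) (by positivity)
      (pow_le_one₀ (by norm_num) (by norm_num)) r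
    calc ‖T - P‖ ^ (2 * 2 ^ k) = ‖(T - P) ^ 2 ^ k‖ ^ 2 := by
          rw [hA.norm_pow_two_pow, ← pow_mul, mul_comm]
      _ = ‖T ^ 2 ^ k - P‖ ^ 2 := by rw [sub_pow_eq_pow_sub hTP hPT hP_idem (by positivity)]
      _ ≤ _ := sq_norm_le_re_trace_adjoint_comp _
      _ ≤ 2 * (1 + (4 / 5 : ℝ) ^ (4 * 2 ^ k)) ^ r - 2 := hHS _ Nat.one_le_two_pow
      _ ≤ 2 * (2 ^ r - 1) * (4 / 5 : ℝ) ^ (4 * 2 ^ k) := by linarith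
      _ = 2 * (2 ^ r - 1) * (16 / 25 : ℝ) ^ (2 * 2 ^ k) := by
          rw [show 4 * 2 ^ k = 2 * (2 * 2 ^ k) by ring, pow_mul]
          norm_num
  have hnorm : ‖T - P‖ ≤ 16 / 25 :=
    le_of_frequently_pow_le_mul_pow (by norm_num) <| frequently_atTop.2 fun N =>
      ⟨2 * 2 ^ N, by have := N.lt_two_pow_self; omega, hbound N⟩
  exact ⟨hnorm, by linarith⟩

/-- **Spectral gap from frame-potential bounds (abstract brickwork bound).**
Let `T` be a self-adjoint operator on a finite-dimensional complex inner product space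
and `P` an orthogonal projection with `TP = P = PT`.  If for some `r ≥ 1` one has
`‖T^m − P‖²_HS ≤ 2(1 + (4/5)^{4m})^r − 2` for every `m ≥ 1` (Hilbert–Schmidt norm,
`‖A‖²_HS = Re tr(A†A)`), then the operator norm satisfies `‖T − P‖ ≤ 16/25`, i.e. the
spectral gap `1 − ‖T − P‖` is at least `9/25`. -/
theorem spectral_gap_from_frame_potential
    {V : Type*} [NormedAddCommGroup V] [InnerProductSpace ℂ V] [FiniteDimensional ℂ V]
    (T P : V →L[ℂ] V)
    (hT_sa : IsSelfAdjoint T)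
    (hP_sa : IsSelfAdjoint P) (hP_idem : P ∘L P = P)
    (hTP : T ∘L P = P) (hPT : P ∘L T = P)
    (r : ℕ) (hr : 1 ≤ r)
    (hHS : ∀ m : ℕ, 1 ≤ m →
      (LinearMap.trace ℂ V
          (ContinuousLinearMap.adjoint (T ^ m - P) ∘L (T ^ m - P)).toLinearMap).re
        ≤ 2 * (1 + (4 / 5 : ℝ) ^ (4 * m)) ^ r - 2) :
    ‖T - P‖ ≤ 16 / 25 ∧ (9 : ℝ) / 25 ≤ 1 - ‖T - P‖ :=
  spectral_gap_from_frame_potential_general T P hT_sa hP_sa hP_idem hTP hPT r hHS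
end
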